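/- arXiv:1201.5500 — 3 statements merged into one kernel-verified Lean document; each statement's English description precedes it below -/
import Mathlib

section
/- Let $H$ be a Hilbert space and $\{x_n\}_{n=0}^\infty$ a total sequence in $H$ whose Gram matrix $(x_n,x_m)_H = \Gamma_{n,m}$ satisfies the Hankel-type symmetry $\Gamma_{n+N,m} = \Gamma_{n,m+N}$ for all $n,m \ge 0$ (which holds when $\Gamma_{rN+j,tN+n}=s_{r+t}^{j,n}$ for Hermitian matrices $S_r=(s_r^{j,n})$). Then the operator $A$ defined on $L = \operatorname{Lin}\{x_n\}$ by $A\left(\sum_k \alpha_k x_k\right) = \sum_k \alpha_k x_{k+N}$ is well-defined (independent of the representation of an element of $L$ as a finite linear combination) and symmetric: $(Ax, y)_H = (x, Ay)_H$ for all $x, y \in L$. -/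
local notation "⟪" x ", " y "⟫" => @inner ℂ _ _ x y

/-!
Write `A` for the map `x k ↦ x (k + N)` extended linearly to finite combinations. The Hankel
symmetry says exactly that `A` is symmetric on the generators, `⟪A x n, x m⟫ = ⟪x n, A x m⟫`, and
this extends bilinearly to all finite combinations. Well-definedness follows from it: if two
combinations `u, v` represent the same vector, then `⟪A u - A v, x m⟫ = ⟪u - v, A x m⟫ = 0` for
every `m`, and a vector orthogonal to a total family is zero.
-/

section ShiftSymmetric

open Finsupp

variable {𝕜 E ι : Type*} [RCLike 𝕜] [NormedAddCommGroup E] [InnerProductSpace 𝕜 E]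
  {x y : ι → E}

theorem inner_linearCombination_left_comm (h : ∀ n m, inner 𝕜 (y n) (x m) = inner 𝕜 (x n) (y m))
    (α : ι →₀ 𝕜) (m : ι) :
    inner 𝕜 (linearCombination 𝕜 y α) (x m) = inner 𝕜 (linearCombination 𝕜 x α) (y m) := by
  simp only [linearCombination_apply, Finsupp.sum_inner, inner_smul_left, h]

theorem inner_linearCombination_comm (h : ∀ n m, inner 𝕜 (y n) (x m) = inner 𝕜 (x n) (y m))
    (α β : ι →₀ 𝕜) :
    inner 𝕜 (linearCombination 𝕜 y α) (linearCombination 𝕜 x β) =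
      inner 𝕜 (linearCombination 𝕜 x α) (linearCombination 𝕜 y β) := by
  simp only [linearCombination_apply (l := β), Finsupp.inner_sum, inner_smul_right,
    inner_linearCombination_left_comm h]

theorem eq_of_inner_eq_of_dense_span (hx : Dense (Submodule.span 𝕜 (Set.range x) : Set E))
    {u v : E} (h : ∀ m, inner 𝕜 u (x m) = inner 𝕜 v (x m)) : u = v :=
  hx.eq_of_inner_left 𝕜 fun _ hw =>
    LinearMap.eqOn_span (f := innerₛₗ 𝕜 u) (g := innerₛₗ 𝕜 v) (by rintro _ ⟨m, rfl⟩; exact h m) hw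

theorem linearCombination_eq_of_inner_comm
    (hx : Dense (Submodule.span 𝕜 (Set.range x) : Set E))
    (h : ∀ n m, inner 𝕜 (y n) (x m) = inner 𝕜 (x n) (y m)) {α β : ι →₀ 𝕜}
    (hαβ : linearCombination 𝕜 x α = linearCombination 𝕜 x β) :
    linearCombination 𝕜 y α = linearCombination 𝕜 y β :=
  eq_of_inner_eq_of_dense_span hx fun m => by
    rw [inner_linearCombination_left_comm h, inner_linearCombination_left_comm h, hαβ]

end ShiftSymmetric

theorem stmt2_general {H : Type*} [NormedAddCommGroup H] [InnerProductSpace ℂ H]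
    (N : ℕ) (x : ℕ → H)
    (htot : (Submodule.span ℂ (Set.range x)).topologicalClosure = ⊤)
    (hHankel : ∀ n m : ℕ, ⟪x (n + N), x m⟫ = ⟪x n, x (m + N)⟫) :
    (∀ α β : ℕ →₀ ℂ,
        (α.sum fun k a => a • x k) = (β.sum fun k a => a • x k) →
        (α.sum fun k a => a • x (k + N)) = (β.sum fun k a => a • x (k + N))) ∧
    (∀ α β : ℕ →₀ ℂ,
        ⟪α.sum fun k a => a • x (k + N), β.sum fun k a => a • x k⟫ =
        ⟪α.sum fun k a => a • x k, β.sum fun k a => a • x (k + N)⟫) := by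
  have hdense := Submodule.dense_iff_topologicalClosure_eq_top.mpr htot
  simp only [← Finsupp.linearCombination_apply]
  exact ⟨fun α β => linearCombination_eq_of_inner_comm (y := fun k => x (k + N)) hdense hHankel,
    inner_linearCombination_comm (y := fun k => x (k + N)) hHankel⟩

/-- If the Gram matrix of a total sequence `x` has the block Hankel symmetry
`Γ_{n+N,m} = Γ_{n,m+N}`, then the shift operator `A (∑ α_k x_k) = ∑ α_k x_{k+N}`
is well defined on the linear span of the `x_n` and symmetric there. -/
theorem stmt2 {H : Type*} [NormedAddCommGroup H] [InnerProductSpace ℂ H]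
    (N : ℕ) (hN : 0 < N) (x : ℕ → H)
    (htot : (Submodule.span ℂ (Set.range x)).topologicalClosure = ⊤)
    (hHankel : ∀ n m : ℕ, ⟪x (n + N), x m⟫ = ⟪x n, x (m + N)⟫) :
    (∀ α β : ℕ →₀ ℂ,
        (α.sum fun k a => a • x k) = (β.sum fun k a => a • x k) →
        (α.sum fun k a => a • x (k + N)) = (β.sum fun k a => a • x (k + N))) ∧
    (∀ α β : ℕ →₀ ℂ,
        ⟪α.sum fun k a => a • x (k + N), β.sum fun k a => a • x k⟫ =
        ⟪α.sum fun k a => a • x k, β.sum fun k a => a • x (k + N)⟫) :=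
  stmt2_general N x htot hHankel
end

section
/- Let $A$ be a densely defined symmetric operator in a Hilbert space $H$ and let $\widetilde{A}$ be a self-adjoint extension of $A$ in a Hilbert space $\widetilde{H} \supseteq H$. Then for all $x, y \in D(A)$ and all $z \in \mathbb{C}_+ \setminus \{i\}$: $(P_H R_z(\widetilde{A}) x, y)_H = \frac{1}{z^2+1}(P_H R_z(\widetilde{A})(A-i)x, (A-i)y)_H - \frac{1}{z^2+1}(Ax, y)_H - \frac{z}{z^2+1}(x, y)_H$, where $R_z(\widetilde{A}) = (\widetilde{A} - z)^{-1}$ and $P_H$ is the orthogonal projection of $\widetilde{H}$ onto $H$. -/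
/-!
Write `u = R_z x`. Since `(Ã - z) u = x` and `Ã` is symmetric, `(u, A y) = (x, y) + z (u, y)`;
since `R_z (Ã - z) = 1` on `D(Ã)`, `R_z (A - i) x = x + (z - i) u`. Pairing the latter with
`(A - i) y` and using the symmetry of `A` gives
`(R_z (A - i) x, (A - i) y) = (Ax, y) + z (x, y) + (z² + 1) (u, y)`, which is the claim solved
for `(u, y)`. As `y` and `(A - i) y` lie in `H`, the projection `P_H` does not change these
inner products.
-/

local notation "⟪" x ", " y "⟫" => @inner ℂ _ _ x y

open Complex

lemma sq_add_one_ne_zero_of_im_pos {z : ℂ} (hz : 0 < z.im) (hzi : z ≠ I) : z ^ 2 + 1 ≠ 0 := by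
  have hzi' : z + I ≠ 0 := fun h => by
    rw [eq_neg_of_add_eq_zero_left h] at hz
    norm_num at hz
  have hfac : z ^ 2 + 1 = (z - I) * (z + I) := by linear_combination I_sq
  rw [hfac]
  exact mul_ne_zero (sub_ne_zero.mpr hzi) hzi'

lemma Submodule.inner_orthogonalProjectionOnto_of_mem_left {E : Type*}
    [NormedAddCommGroup E] [InnerProductSpace ℂ E] (K : Submodule ℂ E) [K.HasOrthogonalProjection]
    {v : E} (hv : v ∈ K) (w : E) :
    ⟪v, (K.orthogonalProjectionOnto w : E)⟫ = ⟪v, w⟫ :=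
  (K.coe_inner ⟨v, hv⟩ _).trans (inner_orthogonalProjectionOnto_eq_of_mem_left ⟨v, hv⟩ w)

section Resolvent

variable {E : Type*} [NormedAddCommGroup E] [InnerProductSpace ℂ E] {Dt : Submodule ℂ E}
  (At : Dt →ₗ[ℂ] E) (R : E →L[ℂ] E) (z : ℂ)

lemma resolvent_apply_sub_smul (hR : ∀ u : Dt, R (At u - z • (u : E)) = u) (u : Dt) (w : ℂ) :
    R (At u - w • (u : E)) = u + (z - w) • R u := by
  have hsplit : At u - w • (u : E) = (At u - z • (u : E)) + (z - w) • (u : E) := by module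
  rw [hsplit, map_add, map_smul, hR]

lemma inner_apply_resolvent (hsymm : ∀ v w : Dt, ⟪At w, (v : E)⟫ = ⟪(w : E), At v⟫)
    {u : E} (hRu : ∃ h : R u ∈ Dt, At ⟨R u, h⟩ - z • R u = u) (v : Dt) :
    ⟪At v, R u⟫ = ⟪(v : E), u⟫ + z * ⟪(v : E), R u⟫ := by
  obtain ⟨h, hAt⟩ := hRu
  rw [hsymm ⟨R u, h⟩ v, eq_add_of_sub_eq hAt, inner_add_right, inner_smul_right]

end Resolvent

theorem stmt3_general {Ht : Type*} [NormedAddCommGroup Ht] [InnerProductSpace ℂ Ht]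
    -- the subspace `H` of `H̃`
    (K : Submodule ℂ Ht) [CompleteSpace K]
    -- the densely defined symmetric operator `A` in `H`
    (D : Submodule ℂ Ht) (hDK : D ≤ K)
    (A : D →ₗ[ℂ] Ht) (hAK : ∀ u : D, A u ∈ K)
    (hsym : ∀ u v : D, ⟪A u, (v : Ht)⟫ = ⟪(u : Ht), A v⟫)
    -- the self-adjoint extension `Ã` in `H̃`
    (Dt : Submodule ℂ Ht) (hDDt : D ≤ Dt)
    (At : Dt →ₗ[ℂ] Ht)
    (hext : ∀ u : D, At ⟨(u : Ht), hDDt u.2⟩ = A u)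
    (hsa : ∀ v w : Ht,
      (∀ u : Dt, ⟪At u, v⟫ = ⟪(u : Ht), w⟫) ↔ ∃ hv : v ∈ Dt, At ⟨v, hv⟩ = w)
    -- the resolvent `R z = (Ã - z)⁻¹`
    (R : ℂ → Ht →L[ℂ] Ht)
    (hR : ∀ z : ℂ, z.im ≠ 0 → ∀ u : Ht,
      ∃ h : R z u ∈ Dt, At ⟨R z u, h⟩ - z • R z u = u)
    (hR' : ∀ z : ℂ, z.im ≠ 0 → ∀ u : Dt, R z (At u - z • (u : Ht)) = (u : Ht))
    (z : ℂ) (hz : 0 < z.im) (hzi : z ≠ Complex.I)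
    (x y : D) :
    ⟪(y : Ht), (K.orthogonalProjection (R z (x : Ht)) : Ht)⟫ =
      (1 / (z ^ 2 + 1)) *
        ⟪A y - Complex.I • (y : Ht),
          (K.orthogonalProjection (R z (A x - Complex.I • (x : Ht))) : Ht)⟫ -
      (1 / (z ^ 2 + 1)) * ⟪(y : Ht), A x⟫ -
      (z / (z ^ 2 + 1)) * ⟪(y : Ht), (x : Ht)⟫ := by
  have hAt_symm : ∀ v w : Dt, ⟪At w, (v : Ht)⟫ = ⟪(w : Ht), At v⟫ :=
    fun v w => (hsa v (At v)).mpr ⟨v.2, rfl⟩ w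
  have hAy : ⟪A y, R z x⟫ = ⟪(y : Ht), (x : Ht)⟫ + z * ⟪(y : Ht), R z x⟫ := by
    rw [← hext y]
    exact inner_apply_resolvent At (R z) z hAt_symm (hR z hz.ne' x) _
  have hRix : R z (A x - I • (x : Ht)) = (x : Ht) + (z - I) • R z x := by
    rw [← hext x]
    exact resolvent_apply_sub_smul At (R z) z (hR' z hz.ne') _ I
  have hpair : ⟪A y - I • (y : Ht), R z (A x - I • (x : Ht))⟫ =
      ⟪(y : Ht), A x⟫ + z * ⟪(y : Ht), (x : Ht)⟫ + (z ^ 2 + 1) * ⟪(y : Ht), R z x⟫ := by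
    simp only [hRix, inner_sub_left, inner_add_right, inner_smul_left, inner_smul_right, conj_I]
    rw [hsym y x, hAy]
    linear_combination (-⟪(y : Ht), R z x⟫) * I_sq
  rw [K.inner_orthogonalProjectionOnto_of_mem_left (hDK y.2),
    K.inner_orthogonalProjectionOnto_of_mem_left (K.sub_mem (hAK y) (K.smul_mem _ (hDK y.2))),
    hpair]
  field_simp [sq_add_one_ne_zero_of_im_pos hz hzi]
  ring

/-- For a densely defined symmetric operator `A` in `H` and a self-adjoint extension
`Ã` in `H̃ ⊇ H` with resolvent `R z = (Ã - z)⁻¹`, one has, for `x, y ∈ D(A)` and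
`z ∈ ℂ₊ \ {i}`:
`(P_H R_z x, y) = (z²+1)⁻¹ (P_H R_z (A-i)x, (A-i)y) - (z²+1)⁻¹ (Ax, y) - z(z²+1)⁻¹ (x, y)`.
(The inner product `(a,b)` here is linear in the first argument, i.e. `(a,b) = ⟪b,a⟫`.) -/
theorem stmt3 {Ht : Type*} [NormedAddCommGroup Ht] [InnerProductSpace ℂ Ht]
    [CompleteSpace Ht]
    -- the subspace `H` of `H̃`
    (K : Submodule ℂ Ht) [CompleteSpace K]
    -- the densely defined symmetric operator `A` in `H`
    (D : Submodule ℂ Ht) (hDK : D ≤ K)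
    (A : D →ₗ[ℂ] Ht) (hAK : ∀ u : D, A u ∈ K)
    (hdenseA : (K : Set Ht) ⊆ closure (D : Set Ht))
    (hsym : ∀ u v : D, ⟪A u, (v : Ht)⟫ = ⟪(u : Ht), A v⟫)
    -- the self-adjoint extension `Ã` in `H̃`
    (Dt : Submodule ℂ Ht) (hDDt : D ≤ Dt)
    (At : Dt →ₗ[ℂ] Ht) (hdense : Dense (Dt : Set Ht))
    (hext : ∀ u : D, At ⟨(u : Ht), hDDt u.2⟩ = A u)
    (hsa : ∀ v w : Ht,
      (∀ u : Dt, ⟪At u, v⟫ = ⟪(u : Ht), w⟫) ↔ ∃ hv : v ∈ Dt, At ⟨v, hv⟩ = w)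
    -- the resolvent `R z = (Ã - z)⁻¹`
    (R : ℂ → Ht →L[ℂ] Ht)
    (hR : ∀ z : ℂ, z.im ≠ 0 → ∀ u : Ht,
      ∃ h : R z u ∈ Dt, At ⟨R z u, h⟩ - z • R z u = u)
    (hR' : ∀ z : ℂ, z.im ≠ 0 → ∀ u : Dt, R z (At u - z • (u : Ht)) = (u : Ht))
    (z : ℂ) (hz : 0 < z.im) (hzi : z ≠ Complex.I)
    (x y : D) :
    ⟪(y : Ht), (K.orthogonalProjection (R z (x : Ht)) : Ht)⟫ =
      (1 / (z ^ 2 + 1)) *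
        ⟪A y - Complex.I • (y : Ht),
          (K.orthogonalProjection (R z (A x - Complex.I • (x : Ht))) : Ht)⟫ -
      (1 / (z ^ 2 + 1)) * ⟪(y : Ht), A x⟫ -
      (z / (z ^ 2 + 1)) * ⟪(y : Ht), (x : Ht)⟫ :=
  stmt3_general K D hDK A hAK hsym Dt hDDt At hext hsa R hR hR' z hz hzi x y
end

section
/- Let $A$ be a densely defined symmetric operator in a Hilbert space $H$ whose closure $\overline{A}$ is self-adjoint (i.e., one, hence both, deficiency indices vanish and $A$ is essentially self-adjoint). Then $A$ has a unique spectral function: every spectral function $\mathbf{E}_\lambda = P_H \widehat{E}_\lambda$ arising from a self-adjoint extension $\widehat{A}$ of $A$ in a possibly larger space $\widehat{H} \supseteq H$ coincides with the spectral resolution $E_\lambda$ of $\overline{A}$. -/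
/-!
For a symmetric `A` one has `|Im z| ‖u‖ ≤ ‖(A - z) u‖`. Hence if `A - z₀` has dense range and
`|z - z₀| < |Im z₀|`, any `w ⊥ ran (A - z)` satisfies `|Im z₀| |⟪y, w⟫| ≤ |z - z₀| ‖y‖ ‖w‖` on
`ran (A - z₀)`, so by density for all `y`, and `y = w` forces `w = 0`. Density of the range thus
propagates through each open half-plane, from `±i` to every nonreal `z`. On `ran (A - z)` every
extension `Â ⊇ A` has `(Â - z)⁻¹ (A - z) p = p`, so all compressed resolvents
`⟪v, P_H (Â - z)⁻¹ x⟫` agree there, and by continuity everywhere.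
-/

local notation "⟪" x ", " y "⟫" => @inner ℂ _ _ x y

open Topology

section Symmetric

variable {H : Type*} [NormedAddCommGroup H] [InnerProductSpace ℂ H]
  {D : Submodule ℂ H} {A : D →ₗ[ℂ] H}

theorem abs_im_mul_norm_le_norm_sub_smul (hsym : ∀ u v : D, ⟪A u, (v : H)⟫ = ⟪(u : H), A v⟫)
    (z : ℂ) (u : D) : |z.im| * ‖(u : H)‖ ≤ ‖A u - z • (u : H)‖ := by
  have hreal : (⟪(u : H), A u⟫).im = 0 :=
    Complex.conj_eq_iff_im.mp (by rw [inner_conj_symm, hsym])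
  have him : (⟪(u : H), A u - z • (u : H)⟫).im = -(z.im * ‖(u : H)‖ ^ 2) := by
    rw [inner_sub_right, inner_smul_right, inner_self_eq_norm_sq_to_K, Complex.sub_im, hreal]
    simp [← Complex.ofReal_pow]
  have key : |z.im| * ‖(u : H)‖ ^ 2 ≤ ‖(u : H)‖ * ‖A u - z • (u : H)‖ :=
    calc |z.im| * ‖(u : H)‖ ^ 2 = |(⟪(u : H), A u - z • (u : H)⟫).im| := by
          rw [him, abs_neg, abs_mul, abs_of_nonneg (sq_nonneg ‖(u : H)‖)]
      _ ≤ ‖⟪(u : H), A u - z • (u : H)⟫‖ := Complex.abs_im_le_norm _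
      _ ≤ ‖(u : H)‖ * ‖A u - z • (u : H)‖ := norm_inner_le_norm _ _
  nlinarith [norm_nonneg (u : H), norm_nonneg (A u - z • (u : H)), abs_nonneg z.im]

theorem dense_range_sub_smul_of_forall_inner_eq_zero [CompleteSpace H] {z : ℂ}
    (h : ∀ w : H, (∀ u : D, ⟪A u - z • (u : H), w⟫ = 0) → w = 0) :
    Dense (LinearMap.range (A - z • D.subtype) : Set H) := by
  rw [Submodule.dense_iff_topologicalClosure_eq_top, Submodule.topologicalClosure_eq_top_iff,
    Submodule.eq_bot_iff]
  exact fun w hw => h w fun u => (Submodule.mem_orthogonal _ w).mp hw _ ⟨u, rfl⟩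

theorem dense_range_sub_smul_of_norm_sub_lt [CompleteSpace H]
    (hsym : ∀ u v : D, ⟪A u, (v : H)⟫ = ⟪(u : H), A v⟫) {z₀ z : ℂ}
    (h₀ : Dense (LinearMap.range (A - z₀ • D.subtype) : Set H)) (hz : ‖z - z₀‖ < |z₀.im|) :
    Dense (LinearMap.range (A - z • D.subtype) : Set H) := by
  refine dense_range_sub_smul_of_forall_inner_eq_zero fun w hw => ?_
  have hbound : ∀ y : H, |z₀.im| * ‖⟪y, w⟫‖ ≤ ‖z - z₀‖ * ‖y‖ * ‖w‖ := by
    refine h₀.induction ?_ (isClosed_le (by fun_prop) (by fun_prop))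
    rintro _ ⟨u, rfl⟩
    have hinner : ⟪A u - z₀ • (u : H), w⟫ = ⟪(z - z₀) • (u : H), w⟫ := by
      rw [show A u - z₀ • (u : H) = (A u - z • (u : H)) + (z - z₀) • (u : H) by module,
        inner_add_left, hw u, zero_add]
    simp only [LinearMap.sub_apply, LinearMap.smul_apply, Submodule.subtype_apply, hinner,
      inner_smul_left, norm_mul, RCLike.norm_conj]
    calc |z₀.im| * (‖z - z₀‖ * ‖⟪(u : H), w⟫‖)
        ≤ |z₀.im| * (‖z - z₀‖ * (‖(u : H)‖ * ‖w‖)) := by gcongr; exact norm_inner_le_norm _ _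
      _ = ‖z - z₀‖ * (|z₀.im| * ‖(u : H)‖) * ‖w‖ := by ring
      _ ≤ ‖z - z₀‖ * ‖A u - z₀ • (u : H)‖ * ‖w‖ := by
          gcongr; exact abs_im_mul_norm_le_norm_sub_smul hsym z₀ u
  have hw2 : |z₀.im| * ‖w‖ ^ 2 ≤ ‖z - z₀‖ * ‖w‖ ^ 2 := by
    simpa [inner_self_eq_norm_sq_to_K, ← pow_two, mul_assoc] using hbound w
  have hsq : ‖w‖ ^ 2 = 0 := le_antisymm (by nlinarith) (sq_nonneg _)
  simpa using hsq

theorem dense_range_sub_smul_of_im_mul_pos [CompleteSpace H]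
    (hsym : ∀ u v : D, ⟪A u, (v : H)⟫ = ⟪(u : H), A v⟫) {z₀ z : ℂ} (hz : 0 < z₀.im * z.im)
    (h₀ : Dense (LinearMap.range (A - z₀ • D.subtype) : Set H)) :
    Dense (LinearMap.range (A - z • D.subtype) : Set H) := by
  set s : Set ℂ := {x | 0 < z₀.im * x.im}
  have hs : IsPreconnected s := (convex_halfSpace_gt
    ⟨fun x y => by simp [mul_add], fun c x => by simp; ring⟩ 0).isPreconnected
  have hz₀ : z₀ ∈ s := mul_self_pos.mpr (left_ne_zero_of_mul hz.ne')
  refine hs.induction₂' (fun x y => Dense (LinearMap.range (A - x • D.subtype) : Set H) →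
      Dense (LinearMap.range (A - y • D.subtype) : Set H))
    (fun p hp => ?_) (fun _ _ _ _ _ _ hxy hyz => hyz ∘ hxy) hz₀ hz h₀
  have hp : 0 < |p.im| := abs_pos.mpr (right_ne_zero_of_mul (ne_of_gt hp))
  have hnear : ∀ᶠ x in 𝓝 p, ‖x - p‖ < |p.im| ∧ ‖p - x‖ < |x.im| :=
    ((continuous_id.sub continuous_const).norm.continuousAt.eventually_lt continuousAt_const
        (by simpa using hp)).and
      ((continuous_const.sub continuous_id).norm.continuousAt.eventually_lt
        (Complex.continuous_im.abs.continuousAt) (by simpa using hp))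
  filter_upwards [nhdsWithin_le_nhds hnear] with x hx
  exact ⟨fun h => dense_range_sub_smul_of_norm_sub_lt hsym h hx.1,
    fun h => dense_range_sub_smul_of_norm_sub_lt hsym h hx.2⟩

end Symmetric

theorem resolvent_apply_sub_smul_of_extension {H H' : Type*} [NormedAddCommGroup H]
    [InnerProductSpace ℂ H] [NormedAddCommGroup H'] [InnerProductSpace ℂ H']
    {D : Submodule ℂ H} {A : D →ₗ[ℂ] H} (J : H →ₗᵢ[ℂ] H') {D' : Submodule ℂ H'}
    {A' : D' →ₗ[ℂ] H'} (hext : ∀ u : D, ∃ h : J (u : H) ∈ D', A' ⟨J (u : H), h⟩ = J (A u))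
    {R : H' →L[ℂ] H'} {z : ℂ} (hR : ∀ u : D', R (A' u - z • (u : H')) = (u : H')) (p : D) :
    R (J ((A - z • D.subtype) p)) = J p := by
  obtain ⟨hp, hAp⟩ := hext p
  simpa [← hAp] using hR ⟨J p, hp⟩

theorem stmt16_general {H : Type*} [NormedAddCommGroup H] [InnerProductSpace ℂ H]
    [CompleteSpace H]
    (D : Submodule ℂ H)
    (A : D →ₗ[ℂ] H)
    (hsym : ∀ u v : D, ⟪A u, (v : H)⟫ = ⟪(u : H), A v⟫)
    -- the deficiency subspaces `N_{∓i}` vanish, i.e. `Ā` is self-adjoint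
    (hdef1 : ∀ w : H, (∀ u : D, ⟪A u - Complex.I • (u : H), w⟫ = 0) → w = 0)
    (hdef2 : ∀ w : H, (∀ u : D, ⟪A u + Complex.I • (u : H), w⟫ = 0) → w = 0)
    -- first self-adjoint extension, in `Ĥ₁ ⊇ H`
    {H1 : Type*} [NormedAddCommGroup H1] [InnerProductSpace ℂ H1]
    (J1 : H →ₗᵢ[ℂ] H1)
    (D1 : Submodule ℂ H1) (A1 : D1 →ₗ[ℂ] H1)
    (hext1 : ∀ u : D, ∃ h : J1 (u : H) ∈ D1, A1 ⟨J1 (u : H), h⟩ = J1 (A u))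
    (R1 : ℂ → H1 →L[ℂ] H1)
    (hR1' : ∀ z : ℂ, z.im ≠ 0 → ∀ u : D1, R1 z (A1 u - z • (u : H1)) = (u : H1))
    -- second self-adjoint extension, in `Ĥ₂ ⊇ H`
    {H2 : Type*} [NormedAddCommGroup H2] [InnerProductSpace ℂ H2]
    (J2 : H →ₗᵢ[ℂ] H2)
    (D2 : Submodule ℂ H2) (A2 : D2 →ₗ[ℂ] H2)
    (hext2 : ∀ u : D, ∃ h : J2 (u : H) ∈ D2, A2 ⟨J2 (u : H), h⟩ = J2 (A u))
    (R2 : ℂ → H2 →L[ℂ] H2)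
    (hR2' : ∀ z : ℂ, z.im ≠ 0 → ∀ u : D2, R2 z (A2 u - z • (u : H2)) = (u : H2)) :
    ∀ z : ℂ, z.im ≠ 0 → ∀ u v : H,
      ⟪J1 v, R1 z (J1 u)⟫ = ⟪J2 v, R2 z (J2 u)⟫ := by
  intro z hz u v
  have hI := dense_range_sub_smul_of_forall_inner_eq_zero hdef1
  have hnegI := dense_range_sub_smul_of_forall_inner_eq_zero (z := -Complex.I) (A := A)
    (by simpa only [neg_smul, sub_neg_eq_add] using hdef2)
  have hdense : Dense (LinearMap.range (A - z • D.subtype) : Set H) := by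
    rcases hz.lt_or_gt with hneg | hpos
    · exact dense_range_sub_smul_of_im_mul_pos hsym (by simpa using hneg) hnegI
    · exact dense_range_sub_smul_of_im_mul_pos hsym (by simpa using hpos) hI
  refine congrFun (Continuous.ext_on hdense (f := fun x => ⟪J1 v, R1 z (J1 x)⟫)
    (g := fun x => ⟪J2 v, R2 z (J2 x)⟫) (by fun_prop) (by fun_prop) ?_) u
  rintro _ ⟨p, rfl⟩
  simp only [resolvent_apply_sub_smul_of_extension J1 hext1 (hR1' z hz),
    resolvent_apply_sub_smul_of_extension J2 hext2 (hR2' z hz), LinearIsometry.inner_map_map]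

/-- If a densely defined symmetric operator `A` is essentially self-adjoint (both
deficiency subspaces vanish), then its spectral function is unique; equivalently
(as formalized here), its generalized resolvent is unique: for any two self-adjoint
extensions `Â₁, Â₂` of `A` in Hilbert spaces `Ĥ₁, Ĥ₂ ⊇ H`, the compressions to `H`
of their resolvents coincide. -/
theorem stmt16 {H : Type*} [NormedAddCommGroup H] [InnerProductSpace ℂ H]
    [CompleteSpace H]
    (D : Submodule ℂ H) (hdense : Dense (D : Set H))
    (A : D →ₗ[ℂ] H)
    (hsym : ∀ u v : D, ⟪A u, (v : H)⟫ = ⟪(u : H), A v⟫)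
    -- the deficiency subspaces `N_{∓i}` vanish, i.e. `Ā` is self-adjoint
    (hdef1 : ∀ w : H, (∀ u : D, ⟪A u - Complex.I • (u : H), w⟫ = 0) → w = 0)
    (hdef2 : ∀ w : H, (∀ u : D, ⟪A u + Complex.I • (u : H), w⟫ = 0) → w = 0)
    -- first self-adjoint extension, in `Ĥ₁ ⊇ H`
    {H1 : Type*} [NormedAddCommGroup H1] [InnerProductSpace ℂ H1] [CompleteSpace H1]
    (J1 : H →ₗᵢ[ℂ] H1)
    (D1 : Submodule ℂ H1) (A1 : D1 →ₗ[ℂ] H1) (hdense1 : Dense (D1 : Set H1))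
    (hext1 : ∀ u : D, ∃ h : J1 (u : H) ∈ D1, A1 ⟨J1 (u : H), h⟩ = J1 (A u))
    (hsa1 : ∀ v w : H1,
      (∀ u : D1, ⟪A1 u, v⟫ = ⟪(u : H1), w⟫) ↔ ∃ hv : v ∈ D1, A1 ⟨v, hv⟩ = w)
    (R1 : ℂ → H1 →L[ℂ] H1)
    (hR1 : ∀ z : ℂ, z.im ≠ 0 → ∀ u : H1,
      ∃ h : R1 z u ∈ D1, A1 ⟨R1 z u, h⟩ - z • R1 z u = u)
    (hR1' : ∀ z : ℂ, z.im ≠ 0 → ∀ u : D1, R1 z (A1 u - z • (u : H1)) = (u : H1))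
    -- second self-adjoint extension, in `Ĥ₂ ⊇ H`
    {H2 : Type*} [NormedAddCommGroup H2] [InnerProductSpace ℂ H2] [CompleteSpace H2]
    (J2 : H →ₗᵢ[ℂ] H2)
    (D2 : Submodule ℂ H2) (A2 : D2 →ₗ[ℂ] H2) (hdense2 : Dense (D2 : Set H2))
    (hext2 : ∀ u : D, ∃ h : J2 (u : H) ∈ D2, A2 ⟨J2 (u : H), h⟩ = J2 (A u))
    (hsa2 : ∀ v w : H2,
      (∀ u : D2, ⟪A2 u, v⟫ = ⟪(u : H2), w⟫) ↔ ∃ hv : v ∈ D2, A2 ⟨v, hv⟩ = w)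
    (R2 : ℂ → H2 →L[ℂ] H2)
    (hR2 : ∀ z : ℂ, z.im ≠ 0 → ∀ u : H2,
      ∃ h : R2 z u ∈ D2, A2 ⟨R2 z u, h⟩ - z • R2 z u = u)
    (hR2' : ∀ z : ℂ, z.im ≠ 0 → ∀ u : D2, R2 z (A2 u - z • (u : H2)) = (u : H2)) :
    ∀ z : ℂ, z.im ≠ 0 → ∀ u v : H,
      ⟪J1 v, R1 z (J1 u)⟫ = ⟪J2 v, R2 z (J2 u)⟫ :=
  stmt16_general D A hsym hdef1 hdef2 J1 D1 A1 hext1 R1 hR1' J2 D2 A2 hext2 R2 hR2'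
end
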